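/- Let μ be a probability measure on the group G₂ = (ℤ/2ℤ)² whose support contains exactly 3 elements, and let a_max = max_{x∈G₂} μ({x}). Then μ ∈ TEC(G₂) if and only if a_max ≥ 1/2. -/

import Mathlib

open scoped BigOperators

/-- The group `G₂ = (ℤ/2ℤ)²`. -/
abbrev G2 : Type := ZMod 2 × ZMod 2

/-- The character pairing `(x,y) = (-1)^(x₁y₁+x₂y₂)`. -/
noncomputable def pairing2 (x y : G2) : ℝ :=
  (-1 : ℝ) ^ (x.1.val * y.1.val + x.2.val * y.2.val)

/-- A probability measure on `G₂`, given by its mass function. -/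
def IsProb2 (p : G2 → ℝ) : Prop := (∀ x, 0 ≤ p x) ∧ ∑ x : G2, p x = 1

/-- The characteristic function `μ̂(y) = Σ_x (x,y) μ({x})`. -/
noncomputable def charFn2 (p : G2 → ℝ) (y : G2) : ℝ := ∑ x : G2, pairing2 x y * p x

/-- The measure of a set `E ⊆ G₂`. -/
noncomputable def measOf2 (p : G2 → ℝ) (E : Set G2) : ℝ := ∑ x : G2, E.indicator p x

/-- `μ` has a trivial equivalence class: every probability measure `ν` with
`|ν̂| = |μ̂|` is a shift `μₓ` of `μ` (central symmetry is the identity on `G₂`). -/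
def TEC2 (p : G2 → ℝ) : Prop :=
  ∀ q : G2 → ℝ, IsProb2 q → (∀ y : G2, |charFn2 q y| = |charFn2 p y|) →
    ∃ x : G2, ∀ e : G2, q e = p (e + x)

/-- The support of `μ`: the set of points of positive mass. -/
def support2 (p : G2 → ℝ) : Set G2 := {x : G2 | 0 < p x}

/-- `a_max = max_{x∈G₂} μ({x})`. -/
noncomputable def amax2 (p : G2 → ℝ) : ℝ := sSup (Set.range p)

/- The Fourier transform on `G₂` is invertible, so `|ν̂| = |μ̂|` leaves only the eight sign
patterns of `μ̂` on the three nontrivial characters. The four patterns given by characters are the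
shifts `μₓ`; the other four are `1/2 - μₓ`, which is a probability measure exactly when
`μ ≤ 1/2`. Hence `μ ∈ TEC(G₂)` iff, whenever `μ ≤ 1/2`, the measure `1/2 - μ` is a shift of `μ`.
A measure with a point `m` of mass zero has only shifts with a zero, so it fails this once
`a_max < 1/2`; and if `μ({a}) = 1/2`, the two remaining masses add up to `1/2` and
`1/2 - μ = μ_{a+m}`. -/

namespace G2

lemma forall_iff {P : G2 → Prop} : (∀ x, P x) ↔ P (0, 0) ∧ P (1, 0) ∧ P (0, 1) ∧ P (1, 1) :=
  ⟨fun h => ⟨h _, h _, h _, h _⟩, fun ⟨h₀, h₁, h₂, h₃⟩ x => by fin_cases x <;> assumption⟩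

lemma sum_eq {M : Type*} [AddCommMonoid M] (f : G2 → M) :
    ∑ x, f x = f (0, 0) + f (1, 0) + f (0, 1) + f (1, 1) := by
  rw [Fintype.sum_prod_type, show (Finset.univ : Finset (ZMod 2)) = {0, 1} from rfl]
  simp [add_assoc, add_left_comm]

lemma add_self (x : G2) : x + x = 0 := by
  revert x; decide

lemma nodup_and_forall_mem {a m e : G2} (ham : a ≠ m) (hea : e ≠ a) (hem : e ≠ m) :
    [a, m, e, e + (a + m)].Nodup ∧ ∀ x, x ∈ [a, m, e, e + (a + m)] := by
  revert a m e; decide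

lemma sum_eq_of_ne {M : Type*} [AddCommMonoid M] (f : G2 → M) {a m e : G2} (ham : a ≠ m)
    (hea : e ≠ a) (hem : e ≠ m) : ∑ x, f x = f a + f m + f e + f (e + (a + m)) := by
  obtain ⟨hnodup, hmem⟩ := nodup_and_forall_mem ham hea hem
  rw [← Finset.sum_subset (Finset.subset_univ _)
    (fun x _ hx => absurd (List.mem_toFinset.2 (hmem x)) hx), List.sum_toFinset _ hnodup]
  simp [add_assoc]

end G2

section CharFn

variable (p : G2 → ℝ)

lemma charFn2_zero_zero : charFn2 p (0, 0) = p (0, 0) + p (1, 0) + p (0, 1) + p (1, 1) := by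
  simp [charFn2, G2.sum_eq, pairing2]

lemma charFn2_one_zero : charFn2 p (1, 0) = p (0, 0) - p (1, 0) + p (0, 1) - p (1, 1) := by
  simp [charFn2, G2.sum_eq, pairing2, ZMod.val_one]; ring

lemma charFn2_zero_one : charFn2 p (0, 1) = p (0, 0) + p (1, 0) - p (0, 1) - p (1, 1) := by
  simp [charFn2, G2.sum_eq, pairing2, ZMod.val_one]; ring

lemma charFn2_one_one : charFn2 p (1, 1) = p (0, 0) - p (1, 0) - p (0, 1) + p (1, 1) := by
  simp [charFn2, G2.sum_eq, pairing2, ZMod.val_one]; ring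

end CharFn

lemma abs_charFn2_half_sub {p : G2 → ℝ} (hp : ∑ x, p x = 1) (y : G2) :
    |charFn2 (fun e => 1 / 2 - p e) y| = |charFn2 p y| := by
  rw [G2.sum_eq] at hp
  revert y
  refine G2.forall_iff.2 ⟨?_, ?_, ?_, ?_⟩ <;>
    simp only [charFn2_zero_zero, charFn2_one_zero, charFn2_zero_one, charFn2_one_one]
  · congr 1; linarith
  all_goals rw [← abs_neg]; congr 1; ring

theorem exists_shift_of_abs_charFn2_eq {p q : G2 → ℝ} (hp : ∑ x, p x = 1) (hq : ∑ x, q x = 1)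
    (h : ∀ y, |charFn2 q y| = |charFn2 p y|) :
    ∃ x, (∀ e, q e = p (e + x)) ∨ ∀ e, q e = 1 / 2 - p (e + x) := by
  obtain ⟨-, h₁, h₂, h₃⟩ := G2.forall_iff.1 h
  simp only [charFn2_one_zero, charFn2_zero_one, charFn2_one_one, abs_eq_abs] at h₁ h₂ h₃
  rw [G2.sum_eq] at hp hq
  rcases h₁ with h₁ | h₁ <;> rcases h₂ with h₂ | h₂ <;> rcases h₃ with h₃ | h₃
  -- the signs on `(1,0), (0,1), (1,1)` are `±(x, ·)`; `+` gives `μₓ` and `-` gives `1/2 - μₓ`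
  on_goal 1 => refine ⟨(0, 0), .inl ?_⟩
  on_goal 2 => refine ⟨(1, 1), .inr ?_⟩
  on_goal 3 => refine ⟨(1, 0), .inr ?_⟩
  on_goal 4 => refine ⟨(0, 1), .inl ?_⟩
  on_goal 5 => refine ⟨(0, 1), .inr ?_⟩
  on_goal 6 => refine ⟨(1, 0), .inl ?_⟩
  on_goal 7 => refine ⟨(1, 1), .inl ?_⟩
  on_goal 8 => refine ⟨(0, 0), .inr ?_⟩
  all_goals
    simp only [G2.forall_iff, Prod.mk_add_mk, add_zero, zero_add, CharTwo.add_self_eq_zero]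
    refine ⟨?_, ?_, ?_, ?_⟩ <;> linarith

section Amax

variable (p : G2 → ℝ)

lemma le_amax2 (x : G2) : p x ≤ amax2 p :=
  le_csSup (Set.finite_range p).bddAbove ⟨x, rfl⟩

lemma exists_eq_amax2 : ∃ a, p a = amax2 p :=
  (Set.range_nonempty p).csSup_mem (Set.finite_range p)

end Amax

lemma exists_eq_zero_of_ncard_support2_lt_four {p : G2 → ℝ} (hp : ∀ x, 0 ≤ p x)
    (h : (support2 p).ncard < 4) : ∃ m, p m = 0 := by
  by_contra! hne
  have : support2 p = Set.univ :=
    Set.eq_univ_of_forall fun x => (hp x).lt_of_ne (hne x).symm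
  simp [this] at h

lemma half_sub_eq_shift {p : G2 → ℝ} (hp : ∑ x, p x = 1) {a m : G2} (hm : p m = 0)
    (ha : p a = 1 / 2) (e : G2) : 1 / 2 - p e = p (e + (a + m)) := by
  have ham : a ≠ m := fun h => by norm_num [h, hm] at ha
  by_cases hea : e = a
  · rw [hea, ← add_assoc, G2.add_self, zero_add, hm, ha]; norm_num
  by_cases hem : e = m
  · rw [hem, add_comm a, ← add_assoc, G2.add_self, zero_add, hm, ha]; norm_num
  rw [G2.sum_eq_of_ne p ham hea hem] at hp
  linarith

theorem tec2_iff {p : G2 → ℝ} (hp : ∑ x, p x = 1) :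
    TEC2 p ↔ ((∀ e, p e ≤ 1 / 2) → ∃ x, ∀ e, 1 / 2 - p e = p (e + x)) := by
  refine ⟨fun htec hle => ?_, fun h q hq habs => ?_⟩
  · refine htec _ ⟨fun e => by linarith [hle e], ?_⟩ (abs_charFn2_half_sub hp)
    rw [Finset.sum_sub_distrib, hp]; norm_num
  obtain ⟨x, hshift | hrefl⟩ := exists_shift_of_abs_charFn2_eq hp hq.2 habs
  · exact ⟨x, hshift⟩
  have hle : ∀ e, p e ≤ 1 / 2 := fun e => by
    have := hrefl (e + x)
    rw [add_assoc, G2.add_self, add_zero] at this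
    linarith [hq.1 (e + x)]
  obtain ⟨x', hx'⟩ := h hle
  exact ⟨x + x', fun e => by rw [hrefl, hx', add_assoc]⟩

/-- Theorem 3, case 2: if the support of `μ` has exactly 3 elements,
then `μ ∈ TEC(G₂)` iff `a_max ≥ 1/2`. -/
theorem stmt16 (p : G2 → ℝ) (hp : IsProb2 p)
    (hsupp : (support2 p).ncard = 3) :
    TEC2 p ↔ 1/2 ≤ amax2 p := by
  obtain ⟨m, hm⟩ := exists_eq_zero_of_ncard_support2_lt_four hp.1 (by omega)
  rw [tec2_iff hp.2]
  constructor
  · intro h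
    by_contra! hlt
    obtain ⟨x, hx⟩ := h fun e => (le_amax2 p e).trans hlt.le
    have := hx (m + x)
    rw [add_assoc, G2.add_self, add_zero, hm] at this
    linarith [le_amax2 p (m + x)]
  · intro hge hle
    obtain ⟨a, ha⟩ := exists_eq_amax2 p
    exact ⟨a + m, half_sub_eq_shift hp.2 hm (le_antisymm (hle a) (ha ▸ hge))⟩
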